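/- For k ≥ 0 with binary expansion k = Σ β_i 2^i, define n_3(k) = Σ_{i odd} β_i 2^{(i-1)/2}, n_5(k) = Σ_{i even, i≥2} β_i 2^{(i-2)/2}, and h(k) = n_3(k) + n_5(k). Then for every odd k > 0, (1/2)·k^{1/2} < h(k) + 1 < (3/2)·k^{1/2}. -/

import Mathlib

open PowerSeries
open scoped Classical

/-- Δ mod 2: the power series Σ_{m≥0} q^{(2m+1)^2} over F_2. -/
noncomputable def Delta : PowerSeries (ZMod 2) :=
  PowerSeries.mk fun n => if ∃ m : ℕ, n = (2 * m + 1) ^ 2 then 1 else 0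

/-- The mod 2 Hecke operator T_p on formal power series over F_2. -/
noncomputable def hecke (p : ℕ) (f : PowerSeries (ZMod 2)) : PowerSeries (ZMod 2) :=
  PowerSeries.mk fun n =>
    PowerSeries.coeff (p * n) f +
      if p ∣ n then PowerSeries.coeff (n / p) f else 0

/-- n_3(k) = Σ_{i odd} β_i 2^{(i-1)/2}, from the binary digits β of k. -/
def n3 (k : ℕ) : ℕ := ∑ i ∈ Finset.range k, if k.testBit (2 * i + 1) then 2 ^ i else 0

/-- n_5(k) = Σ_{i ≥ 2 even} β_i 2^{(i-2)/2}. -/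
def n5 (k : ℕ) : ℕ := ∑ i ∈ Finset.range k, if k.testBit (2 * i + 2) then 2 ^ i else 0

def hh (k : ℕ) : ℕ := n3 k + n5 k

/-- the strict domination relation -/
def domLt (k l : ℕ) : Prop := hh k < hh l ∨ (hh k = hh l ∧ n5 k < n5 l)

/-!
`n3 k` and `n5 k` compress the binary digits of `k` at odd positions, resp. even positions `≥ 2`;
rereading the digits of `a = n3 k`, `b = n5 k` in base 4 as `A`, `B` puts them back, so
`k = k % 2 + 2 A + 4 B`. Rereading binary digits in base 4 maps `a` to a value between
`(a² + 2a) / 3` and `a²`. For odd `k` this gives `k ≤ 1 + 2a² + 4b² < 4 (a + b + 1)²` and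
`9k ≥ 9 + 6a² + 12a + 12b² + 24b > 4 (a + b + 1)²`, the last because `(a - 2b)² ≥ 0`.
-/

def spreadBits (a : ℕ) : ℕ := Nat.ofDigits 4 (Nat.digits 2 a)

lemma spreadBits_eq (a : ℕ) : spreadBits a = a % 2 + 4 * spreadBits (a / 2) := by
  rcases Nat.eq_zero_or_pos a with rfl | ha
  · simp [spreadBits]
  · rw [spreadBits, Nat.digits_def' (by norm_num) ha, Nat.ofDigits_cons, ← spreadBits]

lemma spreadBits_le_sq_and_sq_add_two_mul_le (a : ℕ) : spreadBits a ≤ a ^ 2 ∧ a ^ 2 + 2 * a ≤ 3 * spreadBits a := by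
  induction a using Nat.strong_induction_on with
  | _ a ih =>
    rcases Nat.eq_zero_or_pos a with rfl | ha
    · simp [spreadBits]
    obtain ⟨ih_le, ih_ge⟩ := ih (a / 2) (by omega)
    have hr : a % 2 < 2 := Nat.mod_lt a two_pos
    have ha_eq : a = a % 2 + 2 * (a / 2) := (Nat.mod_add_div a 2).symm
    rw [spreadBits_eq a]
    generalize a % 2 = r at hr ha_eq ⊢
    generalize a / 2 = q at ih_le ih_ge ha_eq ⊢
    subst ha_eq
    interval_cases r <;> constructor <;> nlinarith

lemma n3_eq_sum_range_of_le {k N : ℕ} (h : k ≤ N) :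
    n3 k = ∑ i ∈ Finset.range N, if k.testBit (2 * i + 1) then 2 ^ i else 0 := by
  refine Finset.sum_subset (Finset.range_subset_range.2 h) fun i _ hi => ?_
  have hk : k < 2 ^ (2 * i + 1) :=
    Nat.lt_two_pow_self.trans_le (Nat.pow_le_pow_right (by norm_num) (by simp at hi; omega))
  simp [Nat.testBit_eq_false_of_lt hk]

lemma n3_eq (k : ℕ) : n3 k = k / 2 % 2 + 2 * n3 (k / 4) := by
  rw [n3_eq_sum_range_of_le (Nat.le_succ k), Finset.sum_range_succ',
    n3_eq_sum_range_of_le (Nat.div_le_self k 4), Finset.mul_sum]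
  have hshift (i : ℕ) : (k / 4).testBit (2 * i + 1) = k.testBit (2 * (i + 1) + 1) := by
    rw [show k / 4 = k / 2 / 2 by omega, Nat.testBit_div_two, Nat.testBit_div_two]
    ring_nf
  have hbit : k.testBit 1 = decide (k / 2 % 2 = 1) := by
    simp [Nat.testBit_eq_decide_div_mod_eq]
  simp only [hshift, pow_succ, hbit]
  rcases Nat.mod_two_eq_zero_or_one (k / 2) with h | h <;>
    simp [h, Finset.sum_ite, mul_comm, add_comm]

lemma n5_eq_n3_div_two (k : ℕ) : n5 k = n3 (k / 2) := by
  rw [n3_eq_sum_range_of_le (Nat.div_le_self k 2), n5]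
  simp only [Nat.testBit_div_two]

lemma eq_mod_two_add_spreadBits_n3 (k : ℕ) :
    k = k % 2 + 2 * spreadBits (n3 k) + 4 * spreadBits (n3 (k / 2)) := by
  induction k using Nat.strong_induction_on with
  | _ k ih =>
    rcases Nat.eq_zero_or_pos k with rfl | hk
    · simp [n3, spreadBits]
    have ih_half := ih (k / 2) (by omega)
    have hspread := spreadBits_eq (n3 k)
    have hn3 := n3_eq k
    rw [Nat.div_div_eq_div_mul, show 2 * 2 = 4 from rfl] at ih_half
    rw [show n3 k % 2 = k / 2 % 2 by omega, show n3 k / 2 = n3 (k / 4) by omega] at hspread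
    omega

lemma hh_bounds_of_odd {k : ℕ} (hk : Odd k) :
    k < (2 * (hh k + 1)) ^ 2 ∧ (2 * (hh k + 1)) ^ 2 < 9 * k := by
  have hk_eq := eq_mod_two_add_spreadBits_n3 k
  rw [Nat.odd_iff.mp hk, ← n5_eq_n3_div_two] at hk_eq
  obtain ⟨ha_le, ha_ge⟩ := spreadBits_le_sq_and_sq_add_two_mul_le (n3 k)
  obtain ⟨hb_le, hb_ge⟩ := spreadBits_le_sq_and_sq_add_two_mul_le (n5 k)
  rw [hh]
  generalize n3 k = a, n5 k = b, spreadBits (n3 k) = A, spreadBits (n5 k) = B at *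
  subst hk_eq
  constructor
  · nlinarith
  · nlinarith [sq_nonneg ((a : ℤ) - 2 * b)]

theorem stmt12_general (k : ℕ) (hk : Odd k) :
    (1 / 2 : ℝ) * Real.sqrt k < hh k + 1 ∧ (hh k + 1 : ℝ) < (3 / 2) * Real.sqrt k := by
  obtain ⟨h_lt, h_gt⟩ := hh_bounds_of_odd hk
  have hsqrt_lt : Real.sqrt k < 2 * (hh k + 1) :=
    (Real.sqrt_lt' (by positivity)).mpr (by exact_mod_cast h_lt)
  have hlt_sqrt : (2 / 3 : ℝ) * (hh k + 1) < Real.sqrt k := by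
    rw [Real.lt_sqrt (by positivity)]
    have : ((2 * (hh k + 1) : ℕ) : ℝ) ^ 2 < 9 * k := by exact_mod_cast h_gt
    push_cast at this
    nlinarith
  constructor <;> linarith

theorem stmt12 (k : ℕ) (hk : Odd k) (hk0 : 0 < k) :
    (1 / 2 : ℝ) * Real.sqrt k < hh k + 1 ∧ (hh k + 1 : ℝ) < (3 / 2) * Real.sqrt k :=
  stmt12_general k hk
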